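/- Let $n,k,r$ be integers with $1 < k < n-1$ and $1 \le r < \lfloor n/k \rfloor$. Then the $r$-stable hypersimplex $\Delta_{n,k}^{stab(r)}$ is $(n-1)$-dimensional; that is, its affine span has dimension $n-1$ (it contains $n$ affinely independent points). -/

import Mathlib

open Finset

/-- The index `ℓ + i` taken modulo `n`, as an element of `Fin n`. -/
def cycIdx {n : ℕ} (ℓ : Fin n) (i : ℕ) : Fin n :=
  ⟨(ℓ.val + i) % n, Nat.mod_lt _ ℓ.pos⟩

/-- The cyclic distance between `i` and `j` on the cycle with `n` vertices. -/
def cycDist {n : ℕ} (i j : Fin n) : ℕ :=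
  min ((i.val + n - j.val) % n) ((j.val + n - i.val) % n)

/-- `I` is an `r`-stable `k`-subset of `[n]`: it has `k` elements, any two distinct
ones at cyclic distance at least `r`. -/
def IsStable (n k r : ℕ) (I : Finset (Fin n)) : Prop :=
  I.card = k ∧ ∀ i ∈ I, ∀ j ∈ I, i ≠ j → r ≤ cycDist i j

/-- The characteristic vector of `I ⊆ [n]`. -/
def charVec {n : ℕ} (I : Finset (Fin n)) : Fin n → ℝ :=
  fun i => if i ∈ I then 1 else 0

/-- The `r`-stable `n,k`-hypersimplex: the convex hull of the characteristic vectors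
of the `r`-stable `k`-subsets of `[n]`. -/
noncomputable def stabHS (n k r : ℕ) : Set (Fin n → ℝ) :=
  convexHull ℝ (charVec '' {I : Finset (Fin n) | IsStable n k r I})

/-- Sum of the `r` cyclically consecutive coordinates `x ℓ, x (ℓ+1), …, x (ℓ+r-1)`,
indices modulo `n`. -/
def wSum {n : ℕ} (r : ℕ) (ℓ : Fin n) (x : Fin n → ℝ) : ℝ :=
  ∑ i ∈ Finset.range r, x (cycIdx ℓ i)

/-!
Every vertex of the stable hypersimplex lies on the hyperplane `∑ xᵢ = k`, so its dimension is at
most `n - 1`. Conversely, since `k r < n`, for every `ℓ` the sets `{ℓ} ∪ T` and `{ℓ + 1} ∪ T` with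
`T = {ℓ + a r + 1 : 1 ≤ a < k}` are both `r`-stable, so `eℓ - eℓ₊₁` lies in the direction of the
affine span; going around the cycle, these differences span the whole hyperplane `∑ xᵢ = 0`.
-/

section LinearAlgebra

variable {ι R : Type*} [Fintype ι]

theorem Pi.basisFun_sumCoords_apply [CommRing R] (x : ι → R) :
    (Pi.basisFun R ι).sumCoords x = ∑ i, x i := by
  simp

theorem vectorSpan_le_ker_of_forall_eq {K M : Type*} [CommRing K] [AddCommGroup M] [Module K M]
    {s : Set M} (f : M →ₗ[K] K) (c : K) (hs : ∀ x ∈ s, f x = c) :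
    vectorSpan K s ≤ LinearMap.ker f := by
  rw [vectorSpan_def, Submodule.span_le]
  rintro _ ⟨x, hx, y, hy, rfl⟩
  simp [hs x hx, hs y hy]

theorem ker_sumCoords_le [DecidableEq ι] [CommRing R] {V : Submodule R (ι → R)} (i₀ : ι)
    (hV : ∀ i, Pi.single i₀ 1 - Pi.single i 1 ∈ V) :
    LinearMap.ker (Pi.basisFun R ι).sumCoords ≤ V := by
  intro x hx
  rw [LinearMap.mem_ker, Pi.basisFun_sumCoords_apply] at hx
  have hx' : x = -∑ i, x i • (Pi.single i₀ 1 - Pi.single i 1) := by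
    simp only [smul_sub, Finset.sum_sub_distrib, ← Finset.sum_smul, hx, zero_smul, zero_sub,
      neg_neg]
    ext j
    simp [Finset.sum_apply, Pi.single_apply]
  rw [hx']
  exact V.neg_mem (V.sum_mem fun i _ => V.smul_mem _ (hV i))

theorem finrank_ker_sumCoords [Field R] [Nonempty ι] :
    Module.finrank R (LinearMap.ker (Pi.basisFun R ι).sumCoords) = Fintype.card ι - 1 := by
  have hsurj : LinearMap.range (Pi.basisFun R ι).sumCoords = ⊤ := by
    refine LinearMap.range_eq_top.mpr fun c => ⟨c • Pi.basisFun R ι (Classical.arbitrary ι), ?_⟩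
    simp
  have := LinearMap.finrank_range_add_finrank_ker (Pi.basisFun R ι).sumCoords
  rw [hsurj, finrank_top, Module.finrank_self, Module.finrank_fintype_fun_eq_card] at this
  omega

end LinearAlgebra

section Cyclic
variable {n : ℕ}

theorem cycIdx_zero (ℓ : Fin n) : cycIdx ℓ 0 = ℓ :=
  Fin.ext (Nat.mod_eq_of_lt ℓ.isLt)

theorem cycIdx_cycIdx (ℓ : Fin n) (a b : ℕ) : cycIdx (cycIdx ℓ a) b = cycIdx ℓ (a + b) :=
  Fin.ext (by simp only [cycIdx, Nat.mod_add_mod, Nat.add_assoc])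

theorem injOn_cycIdx (ℓ : Fin n) : Set.InjOn (cycIdx ℓ) (Set.Iio n) := by
  intro a ha b hb h
  have : ℓ.val + a ≡ ℓ.val + b [MOD n] := congrArg Fin.val h
  simpa [Nat.ModEq, Nat.mod_eq_of_lt ha, Nat.mod_eq_of_lt hb] using
    Nat.ModEq.add_left_cancel' ℓ.val this

theorem cycDist_of_val_eq_add_mod {i j : Fin n} {d : ℕ} (hd₀ : 0 < d) (hdn : d < n)
    (hj : j.val = (i.val + d) % n) : cycDist i j = min (n - d) d := by
  have hi := i.isLt
  unfold cycDist
  rcases lt_or_ge (i.val + d) n with h | h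
  · rw [Nat.mod_eq_of_lt h] at hj
    rw [hj, show i.val + n - (i.val + d) = n - d by omega,
      show i.val + d + n - i.val = d + n by omega, Nat.add_mod_right,
      Nat.mod_eq_of_lt (by omega), Nat.mod_eq_of_lt hdn]
  · rw [Nat.mod_eq_sub_mod h, Nat.mod_eq_of_lt (by omega)] at hj
    rw [hj, show i.val + n - (i.val + d - n) = (n - d) + n by omega,
      show i.val + d - n + n - i.val = d by omega, Nat.add_mod_right,
      Nat.mod_eq_of_lt (by omega), Nat.mod_eq_of_lt hdn]

theorem cycDist_cycIdx (ℓ : Fin n) {a b : ℕ} (hab : a < b) (hb : b < n) :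
    cycDist (cycIdx ℓ a) (cycIdx ℓ b) = min (n - (b - a)) (b - a) := by
  refine cycDist_of_val_eq_add_mod (by omega) (by omega) ?_
  rw [show cycIdx ℓ b = cycIdx (cycIdx ℓ a) (b - a) by
    rw [cycIdx_cycIdx, Nat.add_sub_cancel' hab.le]]
  rfl

theorem cycDist_comm (i j : Fin n) : cycDist i j = cycDist j i := min_comm _ _

end Cyclic

section StableSets
variable {n k r : ℕ}

theorem isStable_image_cycIdx (ℓ : Fin n) (O : Finset ℕ) (hO : ∀ a ∈ O, a < n)
    (hgap : ∀ a ∈ O, ∀ b ∈ O, a < b → r ≤ b - a ∧ b - a + r ≤ n) :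
    IsStable n O.card r (O.image (cycIdx ℓ)) := by
  refine ⟨card_image_of_injOn ((injOn_cycIdx ℓ).mono hO), ?_⟩
  simp only [mem_image]
  rintro _ ⟨a, ha, rfl⟩ _ ⟨b, hb, rfl⟩ hne
  rcases lt_or_gt_of_ne (ne_of_apply_ne _ hne) with h | h
  · have := hgap a ha b hb h
    rw [cycDist_cycIdx ℓ h (hO b hb)]
    omega
  · have := hgap b hb a ha h
    rw [cycDist_comm, cycDist_cycIdx ℓ h (hO a ha)]
    omega

def tailOffsets (k r : ℕ) : Finset ℕ :=
  (Ico 1 k).image (· * r + 1)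

theorem mem_tailOffsets {x : ℕ} :
    x ∈ tailOffsets k r ↔ ∃ a, (1 ≤ a ∧ a < k) ∧ a * r + 1 = x := by
  simp [tailOffsets]

theorem tailOffsets_bounds {x : ℕ} (hx : x ∈ tailOffsets k r) :
    r + 1 ≤ x ∧ x + r ≤ k * r + 1 := by
  obtain ⟨a, ⟨ha, hak⟩, rfl⟩ := mem_tailOffsets.mp hx
  have : r ≤ a * r := Nat.le_mul_of_pos_left r ha
  have : (a + 1) * r ≤ k * r := Nat.mul_le_mul_right r hak
  rw [add_mul] at *
  omega

theorem card_tailOffsets (hr : 0 < r) : (tailOffsets k r).card = k - 1 := by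
  rw [tailOffsets, card_image_of_injective _ fun a b h => Nat.eq_of_mul_eq_mul_right hr
    (Nat.add_right_cancel h), Nat.card_Ico]

theorem isStable_image_insert_tailOffsets (hk : 0 < k) (hr : 0 < r) (hn : k * r < n)
    (ℓ : Fin n) {c : ℕ} (hc : c ≤ 1) :
    IsStable n k r ((insert c (tailOffsets k r)).image (cycIdx ℓ)) := by
  have hkr : r ≤ k * r := Nat.le_mul_of_pos_left r hk
  have hc' : c ∉ tailOffsets k r := fun h => by have := tailOffsets_bounds h; omega
  have hcard : (insert c (tailOffsets k r)).card = k := by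
    rw [card_insert_of_notMem hc', card_tailOffsets hr]
    omega
  suffices h : IsStable n (insert c (tailOffsets k r)).card r
      ((insert c (tailOffsets k r)).image (cycIdx ℓ)) by rwa [hcard] at h
  refine isStable_image_cycIdx ℓ _ ?_ ?_
  · intro x hx
    rcases mem_insert.mp hx with rfl | hx
    · omega
    · have := tailOffsets_bounds hx
      omega
  · intro x hx y hy hxy
    rcases mem_insert.mp hx with rfl | hx' <;> rcases mem_insert.mp hy with rfl | hy'
    · omega
    · have := tailOffsets_bounds hy'
      omega
    · have := tailOffsets_bounds hx'
      omega
    · obtain ⟨a, -, rfl⟩ := mem_tailOffsets.mp hx'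
      obtain ⟨b, ⟨-, hbk⟩, rfl⟩ := mem_tailOffsets.mp hy'
      have hab : a < b := Nat.lt_of_mul_lt_mul_right (Nat.lt_of_add_lt_add_right hxy)
      have : (a + 1) * r ≤ b * r := Nat.mul_le_mul_right r hab
      have : (b + 1) * r ≤ k * r := Nat.mul_le_mul_right r hbk
      rw [add_mul] at *
      omega

end StableSets

section Hypersimplex
variable {n k r : ℕ}

theorem charVec_insert {I : Finset (Fin n)} {a : Fin n} (ha : a ∉ I) :
    charVec (insert a I) = Pi.single a 1 + charVec I := by
  ext i
  by_cases h : i = a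
  · subst h
    simp [charVec, ha]
  · simp [charVec, h]

theorem sum_charVec (I : Finset (Fin n)) : ∑ i, charVec I i = I.card := by
  simp [charVec]

theorem single_sub_single_mem_of_cycIdx {V : Submodule ℝ (Fin n → ℝ)}
    (hV : ∀ ℓ : Fin n, Pi.single ℓ 1 - Pi.single (cycIdx ℓ 1) 1 ∈ V) (i j : Fin n) :
    Pi.single i 1 - Pi.single j 1 ∈ V := by
  have step : ∀ m, Pi.single i 1 - Pi.single (cycIdx i m) 1 ∈ V := by
    intro m
    induction m with
    | zero => simp [cycIdx_zero]
    | succ m ih =>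
      rw [← cycIdx_cycIdx, ← sub_add_sub_cancel _ (Pi.single (cycIdx i m) 1)]
      exact V.add_mem ih (hV _)
  have hj : cycIdx i (j.val + n - i.val) = j := by
    have hi := i.isLt
    refine Fin.ext ?_
    simp only [cycIdx]
    rw [show i.val + (j.val + n - i.val) = j.val + n by omega, Nat.add_mod_right,
      Nat.mod_eq_of_lt j.isLt]
  simpa [hj] using step (j.val + n - i.val)

theorem single_sub_single_cycIdx_mem_vectorSpan (hk : 0 < k) (hr : 0 < r) (hn : k * r < n)
    (ℓ : Fin n) :
    Pi.single ℓ 1 - Pi.single (cycIdx ℓ 1) 1 ∈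
      vectorSpan ℝ (charVec '' {I | IsStable n k r I}) := by
  set T := (tailOffsets k r).image (cycIdx ℓ)
  have hkr : r ≤ k * r := Nat.le_mul_of_pos_left r hk
  have hmem : ∀ c ≤ 1, charVec (insert (cycIdx ℓ c) T) ∈ charVec '' {I | IsStable n k r I} :=
    fun c hc => ⟨_, by
      simpa [T, image_insert] using isStable_image_insert_tailOffsets hk hr hn ℓ hc, rfl⟩
  have hnot : ∀ c ≤ 1, cycIdx ℓ c ∉ T := by
    rintro c hc hcT
    obtain ⟨x, hx, hxc⟩ := mem_image.mp hcT
    have := tailOffsets_bounds hx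
    have := injOn_cycIdx ℓ (show x < n by omega) (show c < n by omega) hxc
    omega
  have h := vsub_mem_vectorSpan ℝ (hmem 0 zero_le_one) (hmem 1 le_rfl)
  rwa [vsub_eq_sub, charVec_insert (hnot 0 zero_le_one), charVec_insert (hnot 1 le_rfl),
    add_sub_add_right_eq_sub, cycIdx_zero] at h

theorem vectorSpan_stable_eq_ker_sumCoords (hk : 0 < k) (hr : 0 < r) (hn : k * r < n) :
    vectorSpan ℝ (charVec '' {I | IsStable n k r I}) =
      LinearMap.ker (Pi.basisFun ℝ (Fin n)).sumCoords := by
  have hn₀ : 0 < n := by omega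
  refine le_antisymm (vectorSpan_le_ker_of_forall_eq _ (k : ℝ) ?_) (ker_sumCoords_le ⟨0, hn₀⟩
    (single_sub_single_mem_of_cycIdx (single_sub_single_cycIdx_mem_vectorSpan hk hr hn) _))
  rintro _ ⟨I, hI, rfl⟩
  rw [Pi.basisFun_sumCoords_apply, sum_charVec, hI.1]

end Hypersimplex

theorem stmt3_general (n k r : ℕ) (hr1 : 1 ≤ r) (hr2 : r < n / k) :
    Module.finrank ℝ (affineSpan ℝ (stabHS n k r)).direction = n - 1 := by
  have hk₀ : 0 < k := Nat.pos_of_ne_zero fun h => by simp [h] at hr2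
  have hn : k * r < n := by
    have := (Nat.le_div_iff_mul_le hk₀).mp (hr2 : r + 1 ≤ n / k)
    nlinarith
  have : Nonempty (Fin n) := ⟨⟨0, by omega⟩⟩
  rw [stabHS, affineSpan_convexHull, direction_affineSpan,
    vectorSpan_stable_eq_ker_sumCoords hk₀ hr1 hn, finrank_ker_sumCoords, Fintype.card_fin]

/-- for `1 < k < n-1` and `1 ≤ r < ⌊n/k⌋`, the `r`-stable hypersimplex is
`(n-1)`-dimensional. -/
theorem stmt3 (n k r : ℕ) (hk : 1 < k) (hkn : k < n - 1) (hr1 : 1 ≤ r) (hr2 : r < n / k) :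
    Module.finrank ℝ (affineSpan ℝ (stabHS n k r)).direction = n - 1 :=
  stmt3_general n k r hr1 hr2
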